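/- Let Δ_w = Δ⁰ + w·A + w²·B (w ∈ ℝ) be a quadratic pencil of operators on C^∞(ℝⁿ), where Δ⁰f = (1/2)·Σ_{a,b} S^{ab} ∂_a∂_b f + Σ_a T^a ∂_a f + R·f is a second-order operator with smooth coefficients and S^{ab} = S^{ba}, A is a first-order operator Af = Σ_a α^a ∂_a f + β·f with smooth coefficients, and B is multiplication by a smooth function κ. Suppose the pencil satisfies the self-adjointness condition: for all w ∈ ℝ and all compactly supported smooth f, g on ℝⁿ, ∫ (Δ_w f)·g dx = ∫ f·(Δ_{1−w} g) dx. Then necessarily α^a = γ^a := Σ_b ∂_b S^{ba} − 2T^a and β = (1/2)·Σ_a ∂_a γ^a − κ, and consequently Δ_w = R·id + Δ_w^{can}, where Δ_w^{can} is the canonical pencil built from the data (S^{ab}, γ^a, θ) with θ = 2κ. In particular, if Δ₀(1) = 0 then the pencil is exactly the canonical pencil of (S^{ab}, γ^a, 2κ). -/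

import Mathlib

open scoped BigOperators

/-- Partial derivative `∂_a f` of a function on `ℝⁿ`. -/
noncomputable def pd {n : ℕ} (a : Fin n) (f : (Fin n → ℝ) → ℝ) : (Fin n → ℝ) → ℝ :=
  fun x => fderiv ℝ f x (Pi.single a 1)

/-- The canonical pencil of operators associated to data `(S^{ab}, γ^a, θ)`:
`Δ_w f = (1/2)·(Σ_{a,b} S^{ab} ∂_a∂_b f + Σ_a (Σ_b ∂_b S^{ba} + (2w−1)γ^a) ∂_a f
  + (w·Σ_a ∂_a γ^a + w(w−1)·θ)·f)`. -/
noncomputable def canonicalPencil {n : ℕ} (S : Fin n → Fin n → (Fin n → ℝ) → ℝ)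
    (γ : Fin n → (Fin n → ℝ) → ℝ) (θ : (Fin n → ℝ) → ℝ) (w : ℝ)
    (f : (Fin n → ℝ) → ℝ) : (Fin n → ℝ) → ℝ :=
  fun x => (1/2) * ((∑ a, ∑ b, S a b x * pd a (pd b f) x)
    + (∑ a, ((∑ b, pd b (S b a) x) + (2 * w - 1) * γ a x) * pd a f x)
    + (w * (∑ a, pd a (γ a) x) + w * (w - 1) * θ x) * f x)

/-- The second-order differential operator
`Δ⁰f = (1/2)·Σ_{a,b} S^{ab} ∂_a∂_b f + Σ_a T^a ∂_a f + R·f`. -/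
noncomputable def secondOrderOp {n : ℕ} (S : Fin n → Fin n → (Fin n → ℝ) → ℝ)
    (T : Fin n → (Fin n → ℝ) → ℝ) (R : (Fin n → ℝ) → ℝ)
    (f : (Fin n → ℝ) → ℝ) : (Fin n → ℝ) → ℝ :=
  fun x => (1/2) * (∑ a, ∑ b, S a b x * pd a (pd b f) x)
    + (∑ a, T a x * pd a f x) + R x * f x

/-- The quadratic pencil `Δ_w = Δ⁰ + w·A + w²·B`, where `Δ⁰` is the second-order
operator with coefficients `S, T, R`, `A f = Σ_a α^a ∂_a f + β·f`, and `B` is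
multiplication by `κ`. -/
noncomputable def quadPencil {n : ℕ} (S : Fin n → Fin n → (Fin n → ℝ) → ℝ)
    (T : Fin n → (Fin n → ℝ) → ℝ) (R : (Fin n → ℝ) → ℝ)
    (α : Fin n → (Fin n → ℝ) → ℝ) (β κ : (Fin n → ℝ) → ℝ) (w : ℝ)
    (f : (Fin n → ℝ) → ℝ) : (Fin n → ℝ) → ℝ :=
  fun x => secondOrderOp S T R f x
    + w * ((∑ a, α a x * pd a f x) + β x * f x)
    + w ^ 2 * (κ x * f x)

/-!
Integrating by parts twice, `∫ (Δ⁰ f) g = ∫ f (Δ⁰)* g` for the formal adjoint `(Δ⁰)*`, so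
self-adjointness at `w = 0` together with the fundamental lemma of the calculus of variations
gives `(Δ⁰)* = Δ₁ = Δ⁰ + A + B` on test functions. Since `S` is symmetric, the Leibniz rule
gives `(Δ⁰)* = Δ⁰ + γ^a ∂_a + (1/2) ∂_a γ^a`, so the first-order operators `A + B` and
`γ^a ∂_a + (1/2) ∂_a γ^a` agree on test functions. Evaluating both on a bump function that is
`1` near a point, and on its product with an affine coordinate, compares their coefficients
there; the remaining assertions are algebra.
-/

open MeasureTheory
open scoped ContDiff Topology

variable {n : ℕ}

section Calculus

variable {f g : (Fin n → ℝ) → ℝ}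

theorem ContDiff.contDiff_pd {k m : WithTop ℕ∞} (hf : ContDiff ℝ k f) (hmk : m + 1 ≤ k)
    (a : Fin n) :
    ContDiff ℝ m (pd a f) :=
  (hf.fderiv_right hmk).clm_apply contDiff_const

theorem ContDiff.continuous_pd (hf : ContDiff ℝ 1 f) (a : Fin n) : Continuous (pd a f) :=
  (hf.continuous_fderiv one_ne_zero).clm_apply continuous_const

theorem ContDiff.continuous_pd_pd (hf : ContDiff ℝ 2 f) (a b : Fin n) :
    Continuous (pd a (pd b f)) :=
  (hf.contDiff_pd le_rfl b).continuous_pd a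

theorem HasCompactSupport.hasCompactSupport_pd (hf : HasCompactSupport f) (a : Fin n) :
    HasCompactSupport (pd a f) :=
  hf.fderiv_apply ℝ _

theorem pd_const (a : Fin n) (c : ℝ) : pd a (fun _ => c) = fun _ => 0 := by
  funext x; simp [pd]

theorem pd_mul (hf : Differentiable ℝ f) (hg : Differentiable ℝ g) (a : Fin n) :
    pd a (fun y => f y * g y) = fun x => pd a f x * g x + f x * pd a g x := by
  funext x
  simp [pd, fderiv_fun_mul (hf x) (hg x)]
  ring

theorem pd_add (hf : Differentiable ℝ f) (hg : Differentiable ℝ g) (a : Fin n) :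
    pd a (fun y => f y + g y) = fun x => pd a f x + pd a g x := by
  funext x; simp [pd, fderiv_fun_add (hf x) (hg x)]

theorem pd_sub (hf : Differentiable ℝ f) (hg : Differentiable ℝ g) (a : Fin n) :
    pd a (fun y => f y - g y) = fun x => pd a f x - pd a g x := by
  funext x; simp [pd, fderiv_fun_sub (hf x) (hg x)]

theorem pd_const_mul (hf : Differentiable ℝ f) (c : ℝ) (a : Fin n) :
    pd a (fun y => c * f y) = fun x => c * pd a f x := by
  funext x; simp [pd, fderiv_const_mul (hf x) c]

theorem pd_sum {ι : Type*} (s : Finset ι) {F : ι → (Fin n → ℝ) → ℝ}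
    (hF : ∀ i ∈ s, Differentiable ℝ (F i)) (a : Fin n) :
    pd a (fun y => ∑ i ∈ s, F i y) = fun x => ∑ i ∈ s, pd a (F i) x := by
  funext x; simp [pd, fderiv_fun_sum fun i hi => (hF i hi) x]

theorem pd_pd_mul (hf : ContDiff ℝ 2 f) (hg : ContDiff ℝ 2 g) (a b : Fin n) :
    pd b (pd a (fun y => f y * g y)) = fun x =>
      pd b (pd a f) x * g x + pd a f x * pd b g x + pd b f x * pd a g x
        + f x * pd b (pd a g) x := by
  have hf1 := (hf.contDiff_pd le_rfl a).differentiable one_ne_zero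
  have hg1 := (hg.contDiff_pd le_rfl a).differentiable one_ne_zero
  have hf2 := hf.differentiable two_ne_zero
  have hg2 := hg.differentiable two_ne_zero
  rw [pd_mul hf2 hg2, pd_add (f := fun y => pd a f y * g y) (g := fun y => f y * pd a g y)
    (hf1.mul hg2) (hf2.mul hg1), pd_mul hf1 hg2, pd_mul hf2 hg1]
  funext x; ring

end Calculus

section IntegrationByParts

variable {c u : (Fin n → ℝ) → ℝ}

theorem integral_mul_pd_eq_neg_integral_pd_mul (hc : ContDiff ℝ 1 c) (hu : ContDiff ℝ 1 u)
    (hu_supp : HasCompactSupport u) (a : Fin n) :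
    ∫ x, c x * pd a u x = -∫ x, pd a c x * u x :=
  integral_mul_fderiv_eq_neg_fderiv_mul_of_integrable
    (((hc.continuous_pd a).mul hu.continuous).integrable_of_hasCompactSupport
      hu_supp.mul_left)
    ((hc.continuous.mul (hu.continuous_pd a)).integrable_of_hasCompactSupport
      (hu_supp.hasCompactSupport_pd a).mul_left)
    ((hc.continuous.mul hu.continuous).integrable_of_hasCompactSupport hu_supp.mul_left)
    (fun _ _ => (hc.differentiable one_ne_zero).differentiableAt)
    (fun _ _ => (hu.differentiable one_ne_zero).differentiableAt)

theorem integral_mul_pd_pd_eq_integral_pd_pd_mul (hc : ContDiff ℝ 2 c) (hu : ContDiff ℝ 2 u)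
    (hu_supp : HasCompactSupport u) (a b : Fin n) :
    ∫ x, c x * pd a (pd b u) x = ∫ x, pd b (pd a c) x * u x := by
  rw [integral_mul_pd_eq_neg_integral_pd_mul (hc.of_le one_le_two) (hu.contDiff_pd le_rfl b)
      (hu_supp.hasCompactSupport_pd b) a,
    integral_mul_pd_eq_neg_integral_pd_mul (hc.contDiff_pd le_rfl a) (hu.of_le one_le_two)
      hu_supp b,
    neg_neg]

end IntegrationByParts

theorem eq_of_forall_integral_mul_eq {E : Type*} [NormedAddCommGroup E] [NormedSpace ℝ E]
    [FiniteDimensional ℝ E] [MeasurableSpace E] [BorelSpace E] {μ : Measure E}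
    [IsLocallyFiniteMeasure μ] [μ.IsOpenPosMeasure] {u v : E → ℝ}
    (hu : Continuous u) (hv : Continuous v)
    (h : ∀ f : E → ℝ, ContDiff ℝ ∞ f → HasCompactSupport f →
      ∫ x, f x * u x ∂μ = ∫ x, f x * v x ∂μ) :
    u = v :=
  (hu.ae_eq_iff_eq μ hv).1
    (ae_eq_of_integral_contDiff_smul_eq hu.locallyIntegrable hv.locallyIntegrable h)

noncomputable def firstOrderOp (p : Fin n → (Fin n → ℝ) → ℝ) (q : (Fin n → ℝ) → ℝ)
    (f : (Fin n → ℝ) → ℝ) : (Fin n → ℝ) → ℝ :=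
  fun x => ∑ a, p a x * pd a f x + q x * f x

theorem firstOrderOp_coeff_eq_of_forall_apply_eq {p p' : Fin n → (Fin n → ℝ) → ℝ}
    {q q' : (Fin n → ℝ) → ℝ} (x₀ : Fin n → ℝ)
    (h : ∀ g : (Fin n → ℝ) → ℝ, ContDiff ℝ ∞ g → HasCompactSupport g →
      firstOrderOp p q g x₀ = firstOrderOp p' q' g x₀) :
    (∀ a, p a x₀ = p' a x₀) ∧ q x₀ = q' x₀ := by
  let φ : ContDiffBump x₀ := ⟨1, 2, one_pos, one_lt_two⟩
  have hφ : ⇑φ =ᶠ[𝓝 x₀] fun _ => 1 := by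
    filter_upwards [Metric.closedBall_mem_nhds x₀ φ.rIn_pos] with y hy
    exact φ.one_of_mem_closedBall hy
  have hq : q x₀ = q' x₀ := by
    have hpd : ∀ a, pd a φ x₀ = 0 := fun a => by simp [pd, hφ.fderiv_eq]
    simpa [firstOrderOp, hpd, φ.one_of_mem_closedBall (Metric.mem_closedBall_self φ.rIn_pos.le)]
      using h φ φ.contDiff φ.hasCompactSupport
  refine ⟨fun a => ?_, hq⟩
  let ℓ : (Fin n → ℝ) → ℝ := fun x => (x a - x₀ a) * φ x
  have hℓ : ℓ =ᶠ[𝓝 x₀] fun x => x a - x₀ a := by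
    filter_upwards [hφ] with y hy
    simp [ℓ, hy]
  have hpd : ∀ b, pd b ℓ x₀ = Pi.single (M := fun _ => ℝ) b 1 a := fun b => by
    simp [pd, hℓ.fderiv_eq, fderiv_sub_const, (hasFDerivAt_apply a x₀).fderiv]
  have hℓ_smooth : ContDiff ℝ ∞ ℓ := ((contDiff_apply ℝ ℝ a).sub contDiff_const).mul φ.contDiff
  simpa [firstOrderOp, hpd, ℓ, Pi.single_apply] using h ℓ hℓ_smooth φ.hasCompactSupport.mul_left

theorem integral_half_sum_sum_add_sum_add {P : Fin n → Fin n → (Fin n → ℝ) → ℝ}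
    {Q : Fin n → (Fin n → ℝ) → ℝ} {Z : (Fin n → ℝ) → ℝ}
    (hP : ∀ a b, Integrable (P a b)) (hQ : ∀ a, Integrable (Q a)) (hZ : Integrable Z) :
    ∫ x, (1/2) * (∑ a, ∑ b, P a b x) + (∑ a, Q a x) + Z x
      = (1/2) * (∑ a, ∑ b, ∫ x, P a b x) + (∑ a, ∫ x, Q a x) + ∫ x, Z x := by
  have hP' : ∀ a, Integrable fun x => ∑ b, P a b x :=
    fun a => integrable_finsetSum _ fun b _ => hP a b
  have hPs : Integrable fun x => ∑ a, ∑ b, P a b x := integrable_finsetSum _ fun a _ => hP' a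
  have hQs : Integrable fun x => ∑ a, Q a x := integrable_finsetSum _ fun a _ => hQ a
  have hPs' : Integrable fun x => (1/2) * ∑ a, ∑ b, P a b x := hPs.const_mul _
  have hPQ : Integrable fun x => (1/2) * (∑ a, ∑ b, P a b x) + ∑ a, Q a x := hPs'.add hQs
  rw [integral_add hPQ hZ, integral_add hPs' hQs,
    integral_const_mul, integral_finsetSum _ fun a _ => hP' a,
    integral_finsetSum _ fun a _ => hQ a,
    Finset.sum_congr rfl fun a _ => integral_finsetSum _ fun b _ => hP a b]

section Operators

variable {S : Fin n → Fin n → (Fin n → ℝ) → ℝ} {T : Fin n → (Fin n → ℝ) → ℝ}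
  {R : (Fin n → ℝ) → ℝ} {α : Fin n → (Fin n → ℝ) → ℝ} {β κ : (Fin n → ℝ) → ℝ}
  {f g : (Fin n → ℝ) → ℝ}

noncomputable def canonicalGamma (S : Fin n → Fin n → (Fin n → ℝ) → ℝ)
    (T : Fin n → (Fin n → ℝ) → ℝ) : Fin n → (Fin n → ℝ) → ℝ :=
  fun a z => (∑ b, pd b (S b a) z) - 2 * T a z

noncomputable def secondOrderOpAdjoint (S : Fin n → Fin n → (Fin n → ℝ) → ℝ)
    (T : Fin n → (Fin n → ℝ) → ℝ) (R : (Fin n → ℝ) → ℝ)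
    (g : (Fin n → ℝ) → ℝ) : (Fin n → ℝ) → ℝ :=
  fun x => (1/2) * (∑ a, ∑ b, pd b (pd a (fun z => S a b z * g z)) x)
    + (∑ a, -pd a (fun z => T a z * g z) x) + R x * g x

theorem integral_secondOrderOp_mul_eq_integral_mul_adjoint
    (hS : ∀ a b, ContDiff ℝ ∞ (S a b)) (hT : ∀ a, ContDiff ℝ ∞ (T a)) (hR : Continuous R)
    (hf : ContDiff ℝ ∞ f) (hf_supp : HasCompactSupport f) (hg : ContDiff ℝ ∞ g) :
    ∫ x, secondOrderOp S T R f x * g x = ∫ x, f x * secondOrderOpAdjoint S T R g x := by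
  have integrable {c u : (Fin n → ℝ) → ℝ} (hc : Continuous c) (hu : Continuous u)
      (hu_supp : HasCompactSupport u) : Integrable fun x => c x * u x :=
    (hc.mul hu).integrable_of_hasCompactSupport hu_supp.mul_left
  have hSg a b : ContDiff ℝ ∞ fun z => S a b z * g z := (hS a b).mul hg
  have hTg a : ContDiff ℝ ∞ fun z => T a z * g z := (hT a).mul hg
  have lhs : (fun x => secondOrderOp S T R f x * g x) = fun x =>
      (1/2) * (∑ a, ∑ b, (S a b x * g x) * pd a (pd b f) x)
        + (∑ a, (T a x * g x) * pd a f x) + (R x * g x) * f x := by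
    funext x; simp only [secondOrderOp, add_mul, mul_assoc, Finset.sum_mul, mul_comm (g x)]
  have rhs : (fun x => f x * secondOrderOpAdjoint S T R g x) = fun x =>
      (1/2) * (∑ a, ∑ b, pd b (pd a (fun z => S a b z * g z)) x * f x)
        + (∑ a, -pd a (fun z => T a z * g z) x * f x) + (R x * g x) * f x := by
    funext x; simp only [secondOrderOpAdjoint, mul_add, mul_left_comm, Finset.mul_sum]; ring_nf
  have hf₁ := contDiff_infty.1 hf 1
  have hf₂ := contDiff_infty.1 hf 2
  have hR_g : Integrable fun x => (R x * g x) * f x :=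
    integrable (hR.mul hg.continuous) hf.continuous hf_supp
  rw [lhs, rhs,
    integral_half_sum_sum_add_sum_add
      (fun a b => integrable (hSg a b).continuous (hf₂.continuous_pd_pd a b)
        ((hf_supp.hasCompactSupport_pd b).hasCompactSupport_pd a))
      (fun a => integrable (hTg a).continuous (hf₁.continuous_pd a)
        (hf_supp.hasCompactSupport_pd a)) hR_g,
    integral_half_sum_sum_add_sum_add
      (fun a b => integrable ((contDiff_infty.1 (hSg a b) 2).continuous_pd_pd b a)
        hf.continuous hf_supp)
      (fun a => integrable ((contDiff_infty.1 (hTg a) 1).continuous_pd a).fun_neg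
        hf.continuous hf_supp) hR_g]
  congr 2
  · congr 1
    exact Finset.sum_congr rfl fun a _ => Finset.sum_congr rfl fun b _ =>
      integral_mul_pd_pd_eq_integral_pd_pd_mul (contDiff_infty.1 (hSg a b) 2) hf₂ hf_supp a b
  · refine Finset.sum_congr rfl fun a _ => ?_
    simp only [neg_mul, integral_neg]
    exact integral_mul_pd_eq_neg_integral_pd_mul (contDiff_infty.1 (hTg a) 1) hf₁ hf_supp a

theorem pd_canonicalGamma (hS : ∀ a b, ContDiff ℝ 2 (S a b)) (hT : ∀ a, ContDiff ℝ 1 (T a))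
    (a : Fin n) :
    pd a (canonicalGamma S T a) = fun x => ∑ b, pd a (pd b (S b a)) x - 2 * pd a (T a) x := by
  have hT' := (hT a).differentiable one_ne_zero
  have hSb b := ((hS b a).contDiff_pd le_rfl b).differentiable one_ne_zero
  unfold canonicalGamma
  rw [pd_sub (Differentiable.fun_sum fun b _ => hSb b) (hT'.const_mul 2),
    pd_sum _ fun b _ => hSb b, pd_const_mul hT']

theorem secondOrderOpAdjoint_eq (hS : ∀ a b, ContDiff ℝ 2 (S a b))
    (hSsym : ∀ a b, S a b = S b a) (hT : ∀ a, ContDiff ℝ 1 (T a)) (hg : ContDiff ℝ 2 g) :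
    secondOrderOpAdjoint S T R g = fun x => secondOrderOp S T R g x
      + firstOrderOp (canonicalGamma S T)
          (fun x => (1/2) * ∑ a, pd a (canonicalGamma S T a) x) g x := by
  funext x
  have hSg a b := congrFun (pd_pd_mul (hS a b) hg a b) x
  have hTg a := congrFun (pd_mul ((hT a).differentiable one_ne_zero)
    (hg.differentiable two_ne_zero) a) x
  have swap₁ : ∑ a, ∑ b, pd b (pd a (S a b)) x * g x
      = (∑ a, ∑ b, pd a (pd b (S b a)) x) * g x := by
    rw [Finset.sum_comm, Finset.sum_mul]
    exact Finset.sum_congr rfl fun a _ => (Finset.sum_mul _ _ _).symm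
  have swap₂ : ∑ a, ∑ b, pd a (S a b) x * pd b g x
      = ∑ a, (∑ b, pd b (S b a) x) * pd a g x := by
    rw [Finset.sum_comm]
    exact Finset.sum_congr rfl fun a _ => (Finset.sum_mul _ _ _).symm
  have swap₃ : ∑ a, ∑ b, pd b (S a b) x * pd a g x
      = ∑ a, (∑ b, pd b (S b a) x) * pd a g x := by
    refine Finset.sum_congr rfl fun a _ => ?_
    rw [Finset.sum_mul]
    exact Finset.sum_congr rfl fun b _ => by rw [hSsym a b]
  have swap₄ : ∑ a, ∑ b, S a b x * pd b (pd a g) x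
      = ∑ a, ∑ b, S a b x * pd a (pd b g) x := by
    rw [Finset.sum_comm]
    exact Finset.sum_congr rfl fun a _ => Finset.sum_congr rfl fun b _ => by rw [hSsym b a]
  simp only [secondOrderOpAdjoint, secondOrderOp, firstOrderOp, hSg, hTg,
    pd_canonicalGamma hS hT, canonicalGamma, Finset.sum_add_distrib, neg_add,
    Finset.sum_neg_distrib]
  rw [swap₁, swap₂, swap₃, swap₄]
  simp only [sub_mul, Finset.sum_sub_distrib, mul_assoc, ← Finset.mul_sum, ← Finset.sum_mul]
  ring

theorem continuous_secondOrderOpAdjoint (hS : ∀ a b, ContDiff ℝ 2 (S a b))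
    (hT : ∀ a, ContDiff ℝ 1 (T a)) (hR : Continuous R) (hg : ContDiff ℝ 2 g) :
    Continuous (secondOrderOpAdjoint S T R g) := by
  have hSg a b := ((hS a b).mul hg).continuous_pd_pd b a
  have hTg a := ((hT a).mul (hg.of_le one_le_two)).continuous_pd a
  unfold secondOrderOpAdjoint
  fun_prop

theorem continuous_quadPencil (hS : ∀ a b, Continuous (S a b)) (hT : ∀ a, Continuous (T a))
    (hR : Continuous R) (hα : ∀ a, Continuous (α a)) (hβ : Continuous β) (hκ : Continuous κ)
    (w : ℝ) (hf : ContDiff ℝ 2 f) : Continuous (quadPencil S T R α β κ w f) := by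
  have hf₁ a := (hf.of_le one_le_two).continuous_pd a
  have hf₂ a b := hf.continuous_pd_pd a b
  unfold quadPencil secondOrderOp
  fun_prop

@[simp]
theorem quadPencil_zero : quadPencil S T R α β κ 0 = secondOrderOp S T R := by
  funext f x; simp [quadPencil]

theorem quadPencil_one_apply (f : (Fin n → ℝ) → ℝ) (x : Fin n → ℝ) :
    quadPencil S T R α β κ 1 f x
      = secondOrderOp S T R f x + firstOrderOp α (fun x => β x + κ x) f x := by
  simp only [quadPencil, firstOrderOp]; ring

theorem secondOrderOp_const_one : secondOrderOp S T R (fun _ => 1) = R := by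
  funext x; simp [secondOrderOp, pd_const]

theorem secondOrderOpAdjoint_eq_quadPencil_one
    (hS : ∀ a b, ContDiff ℝ ∞ (S a b)) (hT : ∀ a, ContDiff ℝ ∞ (T a)) (hR : Continuous R)
    (hα : ∀ a, Continuous (α a)) (hβ : Continuous β) (hκ : Continuous κ)
    (hsa : ∀ f g : (Fin n → ℝ) → ℝ, ContDiff ℝ ∞ f → HasCompactSupport f →
      ContDiff ℝ ∞ g → HasCompactSupport g →
      ∫ x, secondOrderOp S T R f x * g x = ∫ x, f x * quadPencil S T R α β κ 1 g x)
    (hg : ContDiff ℝ ∞ g) (hg_supp : HasCompactSupport g) :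
    secondOrderOpAdjoint S T R g = quadPencil S T R α β κ 1 g :=
  eq_of_forall_integral_mul_eq (μ := volume)
    (continuous_secondOrderOpAdjoint (fun a b => contDiff_infty.1 (hS a b) 2)
      (fun a => contDiff_infty.1 (hT a) 1) hR (contDiff_infty.1 hg 2))
    (continuous_quadPencil (fun a b => (hS a b).continuous) (fun a => (hT a).continuous) hR
      hα hβ hκ 1 (contDiff_infty.1 hg 2))
    fun f hf hf_supp => by
      rw [← integral_secondOrderOp_mul_eq_integral_mul_adjoint hS hT hR hf hf_supp hg,
        hsa f g hf hf_supp hg hg_supp]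

theorem quadPencil_eq_add_canonicalPencil (hα : ∀ a x, α a x = canonicalGamma S T a x)
    (hβ : ∀ x, β x = (1/2) * (∑ a, pd a (canonicalGamma S T a) x) - κ x)
    (w : ℝ) (f : (Fin n → ℝ) → ℝ) (x : Fin n → ℝ) :
    quadPencil S T R α β κ w f x
      = R x * f x + canonicalPencil S (canonicalGamma S T) (fun z => 2 * κ z) w f x := by
  simp only [quadPencil, secondOrderOp, canonicalPencil, hα, hβ, canonicalGamma]
  simp only [add_mul, sub_mul, Finset.sum_add_distrib, Finset.sum_sub_distrib, mul_assoc,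
    ← Finset.mul_sum]
  ring

end Operators

/-- a self-adjoint quadratic pencil `Δ_w = Δ⁰ + wA + w²B` necessarily has
`α^a = γ^a := Σ_b ∂_b S^{ba} − 2T^a` and `β = (1/2)·Σ_a ∂_a γ^a − κ`, so that
`Δ_w = R·id + Δ_w^{can}` where `Δ_w^{can}` is the canonical pencil of `(S, γ, 2κ)`;
in particular if `Δ₀(1) = 0` the pencil is exactly that canonical pencil. -/
theorem selfAdjoint_quadPencil_is_canonical {n : ℕ}
    (S : Fin n → Fin n → (Fin n → ℝ) → ℝ)
    (T : Fin n → (Fin n → ℝ) → ℝ) (R : (Fin n → ℝ) → ℝ)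
    (α : Fin n → (Fin n → ℝ) → ℝ) (β κ : (Fin n → ℝ) → ℝ)
    (hS : ∀ a b, ContDiff ℝ (⊤ : ℕ∞) (S a b)) (hSsym : ∀ a b, S a b = S b a)
    (hT : ∀ a, ContDiff ℝ (⊤ : ℕ∞) (T a)) (hR : ContDiff ℝ (⊤ : ℕ∞) R)
    (hα : ∀ a, ContDiff ℝ (⊤ : ℕ∞) (α a)) (hβ : ContDiff ℝ (⊤ : ℕ∞) β)
    (hκ : ContDiff ℝ (⊤ : ℕ∞) κ)
    (hsa : ∀ (w : ℝ) (f g : (Fin n → ℝ) → ℝ),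
      ContDiff ℝ (⊤ : ℕ∞) f → HasCompactSupport f →
      ContDiff ℝ (⊤ : ℕ∞) g → HasCompactSupport g →
      ∫ x, quadPencil S T R α β κ w f x * g x
        = ∫ x, f x * quadPencil S T R α β κ (1 - w) g x) :
    (∀ a x, α a x = (∑ b, pd b (S b a) x) - 2 * T a x)
    ∧ (∀ x, β x
        = (1/2) * (∑ a, pd a (fun z => (∑ b, pd b (S b a) z) - 2 * T a z) x) - κ x)
    ∧ (∀ (w : ℝ) (f : (Fin n → ℝ) → ℝ), ContDiff ℝ (⊤ : ℕ∞) f → ∀ x,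
        quadPencil S T R α β κ w f x
          = R x * f x
            + canonicalPencil S (fun a z => (∑ b, pd b (S b a) z) - 2 * T a z)
                (fun z => 2 * κ z) w f x)
    ∧ ((∀ x, secondOrderOp S T R (fun _ => 1) x = 0) →
        ∀ (w : ℝ) (f : (Fin n → ℝ) → ℝ), ContDiff ℝ (⊤ : ℕ∞) f → ∀ x,
          quadPencil S T R α β κ w f x
            = canonicalPencil S (fun a z => (∑ b, pd b (S b a) z) - 2 * T a z)
                (fun z => 2 * κ z) w f x) := by
  have hsa₀ : ∀ f g : (Fin n → ℝ) → ℝ, ContDiff ℝ ∞ f → HasCompactSupport f →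
      ContDiff ℝ ∞ g → HasCompactSupport g →
      ∫ x, secondOrderOp S T R f x * g x = ∫ x, f x * quadPencil S T R α β κ 1 g x :=
    fun f g hf hf_supp hg hg_supp => by simpa using hsa 0 f g hf hf_supp hg hg_supp
  have hcoeff x : (∀ a, α a x = canonicalGamma S T a x)
      ∧ β x + κ x = (1/2) * ∑ a, pd a (canonicalGamma S T a) x :=
    firstOrderOp_coeff_eq_of_forall_apply_eq (p := α) (q := fun x => β x + κ x)
      (p' := canonicalGamma S T) (q' := fun x => (1/2) * ∑ a, pd a (canonicalGamma S T a) x)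
      x fun g hg hg_supp => by
    have h := congrFun (secondOrderOpAdjoint_eq_quadPencil_one hS hT hR.continuous
      (fun a => (hα a).continuous) hβ.continuous hκ.continuous hsa₀ hg hg_supp) x
    rw [secondOrderOpAdjoint_eq (fun a b => contDiff_infty.1 (hS a b) 2) hSsym
      (fun a => contDiff_infty.1 (hT a) 1) (contDiff_infty.1 hg 2), quadPencil_one_apply] at h
    exact (add_left_cancel h).symm
  have hα' : ∀ a x, α a x = canonicalGamma S T a x := fun a x => (hcoeff x).1 a
  have hβ' x : β x = (1/2) * (∑ a, pd a (canonicalGamma S T a) x) - κ x :=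
    eq_sub_of_add_eq (hcoeff x).2
  refine ⟨hα', hβ', fun w f _ x => quadPencil_eq_add_canonicalPencil hα' hβ' w f x,
    fun h₁ w f _ x => ?_⟩
  have hR₀ : R x = 0 := by simpa [secondOrderOp_const_one] using h₁ x
  rw [quadPencil_eq_add_canonicalPencil hα' hβ' w f x, hR₀, zero_mul, zero_add]
  rfl
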